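/- (Type A_n, highest root.) Let n ≥ 1 and let h = e₁ − e_{n+1} ∈ ℝ^{n+1} (the highest root of A_n). Then for every λ ∈ ℝ^{n+1} with weakly decreasing coordinates λ₁ ≥ λ₂ ≥ ⋯ ≥ λ_{n+1} and λ₁ > λ_{n+1}, one has ℓ_h⁻(λ) = n; that is, the least k such that some composition w of k simple reflections of type A_n satisfies ⟨w λ, h⟩ < 0 equals n. -/

import Mathlib

/-!
`compA n l` permutes coordinates, `(compA n l v) i = v (π i)`, and pairing with the highest root
reads off `v (π 0) - v (π n)`. A simple reflection moves every index by at most one, so the gap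
`π n - π 0`, which starts at `n`, drops by at most one per reflection, and a pair of indices can
only change order when they are adjacent. Hence fewer than `n` reflections keep `π 0 < π n`, and
then `⟪compA n l λ, hrA n⟫ ≥ 0` for dominant `λ`. Conversely, if `λ` is not constant it has a
descent `λ (i + 1) < λ i`; the word `s_n, s_{n-1}, …, s_{i+2}` followed by `s_1, s_2, …, s_{i+1}`
(in the order of application) has `n` letters and sends the indices `0, n` to `i + 1, i`.
-/

open scoped RealInnerProductSpace

/-- The `j`-th simple reflection of type `Aₙ` (`1 ≤ j ≤ n`), acting on `ℝ^{n+1}`: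
it transposes the coordinates numbered `j` and `j+1` (in `1`-based numbering). -/
noncomputable def sA (n j : ℕ) :
    EuclideanSpace ℝ (Fin (n + 1)) → EuclideanSpace ℝ (Fin (n + 1)) :=
  fun v => WithLp.toLp 2 fun i =>
    v ⟨(if (i : ℕ) + 1 = j then j else if (i : ℕ) = j then j - 1 else (i : ℕ)) % (n + 1),
      Nat.mod_lt _ (Nat.succ_pos n)⟩

/-- The composition of the simple reflections indexed by the entries of `l`
(the last entry of the list is applied first). -/
noncomputable def compA (n : ℕ) (l : List ℕ) :
    EuclideanSpace ℝ (Fin (n + 1)) → EuclideanSpace ℝ (Fin (n + 1)) :=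
  l.foldr (fun j g => sA n j ∘ g) id

/-- The fundamental weight `ϖⱼ = e₁ + ⋯ + eⱼ − (j/(n+1))·ε` of type `Aₙ` (`1 ≤ j ≤ n`). -/
noncomputable def wtA (n j : ℕ) : EuclideanSpace ℝ (Fin (n + 1)) :=
  WithLp.toLp 2 fun i => (if (i : ℕ) < j then 1 else 0) - (j : ℝ) / ((n : ℝ) + 1)

/-- The highest root `e₁ − e_{n+1}` of type `Aₙ`. -/
noncomputable def hrA (n : ℕ) : EuclideanSpace ℝ (Fin (n + 1)) :=
  WithLp.toLp 2 fun i => if (i : ℕ) = 0 then 1 else if (i : ℕ) = n then -1 else 0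

def sAIndex (n j : ℕ) (i : Fin (n + 1)) : Fin (n + 1) :=
  ⟨(if (i : ℕ) + 1 = j then j else if (i : ℕ) = j then j - 1 else (i : ℕ)) % (n + 1),
    Nat.mod_lt _ (Nat.succ_pos n)⟩

def compAIndex (n : ℕ) (l : List ℕ) : Fin (n + 1) → Fin (n + 1) :=
  l.foldr (fun j g => g ∘ sAIndex n j) id

section Index

variable {n j : ℕ}

lemma sAIndex_val (hj : 1 ≤ j) (hjn : j ≤ n) (i : Fin (n + 1)) :
    (sAIndex n j i : ℕ) = if (i : ℕ) + 1 = j then j else if (i : ℕ) = j then j - 1 else i := by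
  have := i.isLt
  refine Nat.mod_eq_of_lt ?_
  split_ifs <;> omega

lemma sAIndex_gap (hj : 1 ≤ j) (hjn : j ≤ n) {a b : Fin (n + 1)} (hab : (a : ℕ) + 2 ≤ b) :
    (b : ℕ) + sAIndex n j a ≤ sAIndex n j b + a + 1 := by
  rw [sAIndex_val hj hjn, sAIndex_val hj hjn]
  split_ifs <;> omega

lemma compA_apply (l : List ℕ) (v : EuclideanSpace ℝ (Fin (n + 1))) (i : Fin (n + 1)) :
    compA n l v i = v (compAIndex n l i) := by
  induction l generalizing i with
  | nil => rfl
  | cons j l ih => exact ih (sAIndex n j i)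

lemma compAIndex_append (l₁ l₂ : List ℕ) (i : Fin (n + 1)) :
    compAIndex n (l₁ ++ l₂) i = compAIndex n l₂ (compAIndex n l₁ i) := by
  induction l₁ generalizing i with
  | nil => rfl
  | cons j l₁ ih => exact ih (sAIndex n j i)

lemma compAIndex_gap {l : List ℕ} (hl : ∀ m ∈ l, 1 ≤ m ∧ m ≤ n) {a b : Fin (n + 1)}
    (hab : (a : ℕ) + l.length < b) :
    (b : ℕ) + compAIndex n l a ≤ compAIndex n l b + a + l.length := by
  induction l using List.reverseRecOn with
  | nil => simp [compAIndex]
  | append_singleton l j ih =>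
    have hj := hl j (by simp)
    simp only [compAIndex_append, List.length_append, List.length_singleton] at hab ⊢
    have ih := ih (fun m hm => hl m (by simp [hm])) (by omega)
    have := sAIndex_gap hj.1 hj.2 (a := compAIndex n l a) (b := compAIndex n l b) (by omega)
    change _ + (sAIndex n j _ : ℕ) ≤ sAIndex n j _ + _ + _
    omega

lemma compAIndex_range' {a k : ℕ} (ha : 1 ≤ a) (hak : a + k ≤ n + 1) (i : Fin (n + 1)) :
    (compAIndex n (List.range' a k) i : ℕ) =
      if (i : ℕ) + 1 = a then a - 1 + k else if a ≤ i ∧ (i : ℕ) < a + k then i - 1 else i := by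
  induction k generalizing a i with
  | zero => change (i : ℕ) = _; split_ifs <;> omega
  | succ k ih =>
    rw [List.range'_succ]
    change (compAIndex n (List.range' (a + 1) k) (sAIndex n a i) : ℕ) = _
    rw [ih (by omega) (by omega), sAIndex_val ha (by omega)]
    split_ifs <;> omega

lemma compAIndex_range'_reverse {a k : ℕ} (ha : 1 ≤ a) (hak : a + k ≤ n + 1) (i : Fin (n + 1)) :
    (compAIndex n (List.range' a k).reverse i : ℕ) =
      if (i : ℕ) = a - 1 + k then a - 1 else if a - 1 ≤ i ∧ (i : ℕ) < a - 1 + k then i + 1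
      else i := by
  induction k generalizing a i with
  | zero => change (i : ℕ) = _; split_ifs <;> omega
  | succ k ih =>
    rw [List.range'_succ, List.reverse_cons, compAIndex_append]
    change (sAIndex n a (compAIndex n (List.range' (a + 1) k).reverse i) : ℕ) = _
    rw [sAIndex_val ha (by omega), ih (by omega) (by omega)]
    split_ifs <;> omega

end Index

def descentWordA (n i : ℕ) : List ℕ :=
  (List.range' (i + 2) (n - 1 - i)).reverse ++ List.range' 1 (i + 1)

section DescentWord

variable {n i : ℕ}

lemma descentWordA_length (hi : i < n) : (descentWordA n i).length = n := by
  simp only [descentWordA, List.length_append, List.length_reverse, List.length_range']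
  omega

lemma descentWordA_mem (hi : i < n) : ∀ m ∈ descentWordA n i, 1 ≤ m ∧ m ≤ n := by
  simp only [descentWordA, List.mem_append, List.mem_reverse, List.mem_range'_1]
  omega

lemma compAIndex_descentWordA_zero (hi : i < n) :
    compAIndex n (descentWordA n i) 0 = ⟨i + 1, by omega⟩ := by
  have hfix : (compAIndex n (List.range' (i + 2) (n - 1 - i)).reverse 0 : ℕ) = 0 := by
    rw [compAIndex_range'_reverse (by omega) (by omega), Fin.val_zero]
    split_ifs <;> omega
  ext
  rw [descentWordA, compAIndex_append, compAIndex_range' le_rfl (by omega), hfix]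
  simp

lemma compAIndex_descentWordA_last (hi : i < n) :
    compAIndex n (descentWordA n i) (Fin.last n) = ⟨i, by omega⟩ := by
  have hdown : (compAIndex n (List.range' (i + 2) (n - 1 - i)).reverse (Fin.last n) : ℕ) =
      i + 1 := by
    rw [compAIndex_range'_reverse (by omega) (by omega), Fin.val_last]
    split_ifs <;> omega
  ext
  show _ = i
  rw [descentWordA, compAIndex_append, compAIndex_range' le_rfl (by omega), hdown]
  split_ifs <;> omega

end DescentWord

lemma inner_hrA {n : ℕ} (hn : 1 ≤ n) (v : EuclideanSpace ℝ (Fin (n + 1))) :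
    ⟪v, hrA n⟫ = v 0 - v (Fin.last n) := by
  have : hrA n = EuclideanSpace.single 0 1 - EuclideanSpace.single (Fin.last n) 1 := by
    ext i
    simp only [hrA, PiLp.sub_apply, PiLp.single_apply, Fin.ext_iff, Fin.val_zero,
      Fin.val_last]
    split_ifs <;> first | omega | norm_num
  simp [this, inner_sub_right, EuclideanSpace.inner_single_right]

lemma Fin.exists_succ_lt_castSucc {n : ℕ} {α : Type*} [LinearOrder α] {f : Fin (n + 1) → α}
    (h : f (Fin.last n) < f 0) : ∃ i : Fin n, f i.succ < f i.castSucc := by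
  by_contra! hmono
  exact (Fin.monotone_iff_le_succ.mpr hmono (Fin.zero_le _)).not_gt h

theorem statement7 (n : ℕ) (hn : 1 ≤ n)
    (lam : EuclideanSpace ℝ (Fin (n + 1)))
    (hdec : ∀ i j : Fin (n + 1), i ≤ j → lam j ≤ lam i)
    (hstr : lam ⟨n, by omega⟩ < lam ⟨0, by omega⟩) :
    IsLeast {k : ℕ | ∃ l : List ℕ, (∀ m ∈ l, 1 ≤ m ∧ m ≤ n) ∧ l.length = k ∧
        ⟪compA n l lam, hrA n⟫ < 0} n := by
  constructor
  · obtain ⟨⟨i, hi⟩, hlt⟩ := Fin.exists_succ_lt_castSucc (f := fun i => lam i) hstr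
    refine ⟨descentWordA n i, descentWordA_mem hi, descentWordA_length hi, ?_⟩
    rw [inner_hrA hn, compA_apply, compA_apply, compAIndex_descentWordA_zero hi,
      compAIndex_descentWordA_last hi]
    exact sub_neg.mpr hlt
  · rintro k ⟨l, hl, rfl, hneg⟩
    by_contra! hlen
    have hgap := compAIndex_gap hl (a := 0) (b := Fin.last n) (by simpa using hlen)
    have hle := hdec (compAIndex n l 0) (compAIndex n l (Fin.last n))
      (Fin.le_def.mpr (by simp only [Fin.val_last, Fin.val_zero] at hgap; omega))
    rw [inner_hrA hn, compA_apply, compA_apply] at hneg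
    linarith
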